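/- Let N ≥ 1, σ ∈ (1,2), β ∈ (σ-1, 1], Γ > 0, and let Y be a metric space. Let K : Y × (ℝ^N \ {0}) → ℝ be such that for each y ∈ Y, K(y,·) is measurable, even in z, and satisfies 0 ≤ K(y,z) ≤ Γ|z|^{-(N+σ)}, and for each z ≠ 0 the map y ↦ K(y,z) is continuous. Let φ : ℝ^N → ℝ be bounded with |φ| ≤ M₀ and differentiable with ∇φ β-Hölder with constant M₁. Then the map (y, x) ↦ L_yφ(x) is continuous on Y × ℝ^N, where L_yφ(x) = ½ ∫_{ℝ^N} (φ(x+z) + φ(x-z) - 2φ(x)) K(y,z) dz. -/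

import Mathlib

open MeasureTheory Metric Set Filter

lemma ballInt {N : ℕ} {s : ℝ} (hs : -(N : ℝ) < s) (hs0 : s < 0) :
    IntegrableOn (fun z : EuclideanSpace ℝ (Fin N) => ‖z‖ ^ s) (ball 0 1) := by
  have hmeas : Measurable fun z : EuclideanSpace ℝ (Fin N) => ‖z‖ ^ s := by fun_prop
  have hnn : ∀ z : EuclideanSpace ℝ (Fin N), 0 ≤ ‖z‖ ^ s :=
    fun z => Real.rpow_nonneg (norm_nonneg z) s
  set μ := (volume : Measure (EuclideanSpace ℝ (Fin N))).restrict (ball 0 1) with hμ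
  set B := (volume : Measure (EuclideanSpace ℝ (Fin N))) (ball 0 1) with hB
  have hBfin : B < ⊤ := measure_ball_lt_top
  refine ⟨hmeas.aestronglyMeasurable.restrict, ?_⟩
  rw [HasFiniteIntegral, lintegral_enorm_of_nonneg hnn,
    lintegral_eq_lintegral_meas_le μ (ae_of_all _ hnn) hmeas.aemeasurable]
  have hres : ∀ t : ℝ, μ {a | t ≤ ‖a‖ ^ s} ≤ B := fun t =>
    le_trans (measure_mono (subset_univ _)) (le_of_eq (Measure.restrict_apply_univ _))
  have key : ∀ t : ℝ, 1 < t → μ {a | t ≤ ‖a‖ ^ s} ≤ ENNReal.ofReal (t ^ (s⁻¹ * N)) * B := by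
    intro t ht
    have ht0 : (0:ℝ) < t := lt_trans one_pos ht
    have hsub : {a : EuclideanSpace ℝ (Fin N) | t ≤ ‖a‖ ^ s} ⊆ closedBall 0 (t ^ s⁻¹) := by
      intro a ha
      simp only [mem_setOf_eq] at ha
      rcases eq_or_ne a 0 with rfl | h0
      · rw [norm_zero, Real.zero_rpow hs0.ne] at ha; linarith
      · have hna : 0 < ‖a‖ := norm_pos_iff.2 h0
        rw [mem_closedBall_zero_iff]
        exact (Real.le_rpow_inv_iff_of_neg hna ht0 hs0).2 ha
    calc μ {a | t ≤ ‖a‖ ^ s}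
        ≤ volume (closedBall (0 : EuclideanSpace ℝ (Fin N)) (t ^ s⁻¹)) :=
          le_trans (Measure.restrict_apply_le _ _) (measure_mono hsub)
      _ = ENNReal.ofReal ((t ^ s⁻¹) ^ Module.finrank ℝ (EuclideanSpace ℝ (Fin N))) * B :=
          Measure.addHaar_closedBall _ _ (Real.rpow_nonneg ht0.le _)
      _ = ENNReal.ofReal (t ^ (s⁻¹ * N)) * B := by
          rw [finrank_euclideanSpace_fin, ← Real.rpow_natCast (t ^ s⁻¹) N,
            ← Real.rpow_mul ht0.le]
  calc (∫⁻ t in Ioi (0:ℝ), μ {a | t ≤ ‖a‖ ^ s})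
      ≤ ∫⁻ t in Ioc (0:ℝ) 1 ∪ Ioi 1, μ {a | t ≤ ‖a‖ ^ s} :=
        lintegral_mono_set Ioi_subset_Ioc_union_Ioi
    _ ≤ (∫⁻ t in Ioc (0:ℝ) 1, μ {a | t ≤ ‖a‖ ^ s}) + ∫⁻ t in Ioi 1, μ {a | t ≤ ‖a‖ ^ s} :=
        lintegral_union_le _ _ _
    _ < ⊤ := by
        refine ENNReal.add_lt_top.2 ⟨?_, ?_⟩
        · calc (∫⁻ t in Ioc (0:ℝ) 1, μ {a | t ≤ ‖a‖ ^ s})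
              ≤ ∫⁻ _ in Ioc (0:ℝ) 1, B :=
                setLIntegral_mono' measurableSet_Ioc fun t _ => hres t
            _ = B * volume (Ioc (0:ℝ) 1) := setLIntegral_const _ _
            _ < ⊤ := ENNReal.mul_lt_top hBfin (by simp)
        · calc (∫⁻ t in Ioi (1:ℝ), μ {a | t ≤ ‖a‖ ^ s})
              ≤ ∫⁻ t in Ioi (1:ℝ), ENNReal.ofReal (t ^ (s⁻¹ * N)) * B :=
                setLIntegral_mono' measurableSet_Ioi fun t ht => key t ht
            _ = (∫⁻ t in Ioi (1:ℝ), ENNReal.ofReal (t ^ (s⁻¹ * N))) * B :=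
                lintegral_mul_const' _ _ hBfin.ne
            _ < ⊤ := by
                refine ENNReal.mul_lt_top ?_ hBfin
                have hsinv : s⁻¹ < 0 := inv_lt_zero.mpr hs0
                have h1 : s⁻¹ * (N:ℝ) < s⁻¹ * (-s) :=
                  mul_lt_mul_of_neg_left (by linarith) hsinv
                have h2 : s⁻¹ * (-s) = -1 := by rw [mul_neg, inv_mul_cancel₀ hs0.ne]
                exact (integrableOn_Ioi_rpow_of_lt (by linarith) one_pos).setLIntegral_lt_top

lemma secondDiff {N : ℕ} {β M₁ : ℝ} (hβ0 : 0 < β) (hM₁ : 0 ≤ M₁)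
    (φ : EuclideanSpace ℝ (Fin N) → ℝ) (hφdiff : Differentiable ℝ φ)
    (hol : ∀ a b, ‖fderiv ℝ φ a - fderiv ℝ φ b‖ ≤ M₁ * ‖a - b‖ ^ β)
    (x z : EuclideanSpace ℝ (Fin N)) :
    |φ (x + z) + φ (x - z) - 2 * φ x| ≤ 2 * M₁ * ‖z‖ ^ (1 + β) := by
  rcases eq_or_ne z 0 with rfl | hz
  · simp only [add_zero, sub_zero, norm_zero, Real.zero_rpow (by positivity : (1:ℝ) + β ≠ 0),
      mul_zero]
    have : φ x + φ x - 2 * φ x = 0 := by ring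
    rw [this, abs_zero]
  · have hzn : 0 < ‖z‖ := norm_pos_iff.2 hz
    set s := closedBall x ‖z‖ with hsdef
    have hd : ∀ c ∈ s, HasFDerivWithinAt φ (fderiv ℝ φ c) s c :=
      fun c _ => (hφdiff c).hasFDerivAt.hasFDerivWithinAt
    have hb : ∀ c ∈ s, ‖fderiv ℝ φ c - fderiv ℝ φ x‖ ≤ M₁ * ‖z‖ ^ β := by
      intro c hc
      refine le_trans (hol c x) (mul_le_mul_of_nonneg_left ?_ hM₁)
      exact Real.rpow_le_rpow (norm_nonneg _) (mem_closedBall_iff_norm.1 hc) hβ0.le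
    have hmem1 : x + z ∈ s := by
      simp [hsdef, mem_closedBall_iff_norm]
    have hmem2 : x - z ∈ s := by
      simp [hsdef, mem_closedBall_iff_norm]
    have hx : x ∈ s := mem_closedBall_self hzn.le
    have h1 := Convex.norm_image_sub_le_of_norm_hasFDerivWithin_le' hd hb
      (convex_closedBall x ‖z‖) hx hmem1
    have h2 := Convex.norm_image_sub_le_of_norm_hasFDerivWithin_le' hd hb
      (convex_closedBall x ‖z‖) hx hmem2
    rw [add_sub_cancel_left] at h1
    have hsz : x - z - x = -z := by abel
    rw [hsz] at h2
    have hnegz : ‖(-z : EuclideanSpace ℝ (Fin N))‖ = ‖z‖ := norm_neg z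
    rw [hnegz] at h2
    have hsplit : φ (x + z) + φ (x - z) - 2 * φ x =
        (φ (x + z) - φ x - (fderiv ℝ φ x) z) + (φ (x - z) - φ x - (fderiv ℝ φ x) (-z)) := by
      rw [map_neg]; ring
    have hrw : ‖z‖ ^ (1 + β) = ‖z‖ * ‖z‖ ^ β := by
      rw [Real.rpow_add hzn, Real.rpow_one]
    calc |φ (x + z) + φ (x - z) - 2 * φ x|
        ≤ |φ (x + z) - φ x - (fderiv ℝ φ x) z| + |φ (x - z) - φ x - (fderiv ℝ φ x) (-z)| := by
          rw [hsplit]; exact abs_add_le _ _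
      _ ≤ M₁ * ‖z‖ ^ β * ‖z‖ + M₁ * ‖z‖ ^ β * ‖z‖ := add_le_add h1 h2
      _ = 2 * M₁ * ‖z‖ ^ (1 + β) := by rw [hrw]; ring


/-- The nonlocal operator `Lφ(x) = ½ ∫ (φ(x+z) + φ(x-z) - 2φ(x)) K(z) dz`. -/
noncomputable def nonlocalOp {N : ℕ} (K : EuclideanSpace ℝ (Fin N) → ℝ)
    (φ : EuclideanSpace ℝ (Fin N) → ℝ) (x : EuclideanSpace ℝ (Fin N)) : ℝ :=
  (1 / 2) * ∫ z, (φ (x + z) + φ (x - z) - 2 * φ x) * K z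

/-- joint continuity of `(y,x) ↦ L_yφ(x)` for a family of even kernels bounded by
`Γ|z|^{-(N+σ)}`, continuous in `y` for each fixed `z ≠ 0`, applied to a bounded `φ` with
`β`-Hölder gradient. -/
theorem stmt16 (N : ℕ) (hN : 1 ≤ N) (σ β Γ : ℝ) (hσ₁ : 1 < σ) (hσ₂ : σ < 2)
    (hβ₁ : σ - 1 < β) (hβ₂ : β ≤ 1) (hΓ : 0 < Γ)
    (Y : Type*) [MetricSpace Y]
    (K : Y → EuclideanSpace ℝ (Fin N) → ℝ)
    (hKmeas : ∀ y, Measurable (K y))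
    (hKeven : ∀ y z, z ≠ 0 → K y (-z) = K y z)
    (hKbound : ∀ y z, z ≠ 0 → 0 ≤ K y z ∧ K y z ≤ Γ * ‖z‖ ^ (-((N : ℝ) + σ)))
    (hKcont : ∀ z : EuclideanSpace ℝ (Fin N), z ≠ 0 → Continuous fun y => K y z)
    (φ : EuclideanSpace ℝ (Fin N) → ℝ) (M₀ M₁ : ℝ)
    (hφbdd : ∀ x, |φ x| ≤ M₀) (hφdiff : Differentiable ℝ φ)
    (hφgrad : ∀ a b, ‖gradient φ a - gradient φ b‖ ≤ M₁ * ‖a - b‖ ^ β) :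
    Continuous fun p : Y × EuclideanSpace ℝ (Fin N) => nonlocalOp (K p.1) φ p.2 := by
  simp only [nonlocalOp]
  have hβ0 : 0 < β := by linarith
  have hM₀ : 0 ≤ M₀ := le_trans (abs_nonneg _) (hφbdd 0)
  have hφc : Continuous φ := hφdiff.continuous
  set e : EuclideanSpace ℝ (Fin N) := EuclideanSpace.single ⟨0, hN⟩ (1:ℝ) with he
  have hene : e ≠ 0 := by
    intro h
    have := congrArg (fun v => v ⟨0, hN⟩) h
    simp [he, EuclideanSpace.single_apply] at this
  have henorm : ‖e‖ = 1 := by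
    rw [he, EuclideanSpace.norm_single]; norm_num
  have hM₁ : 0 ≤ M₁ := by
    have h := hφgrad e 0
    rw [sub_zero, henorm, Real.one_rpow, mul_one] at h
    exact le_trans (norm_nonneg _) h
  have hol : ∀ a b, ‖fderiv ℝ φ a - fderiv ℝ φ b‖ ≤ M₁ * ‖a - b‖ ^ β := by
    intro a b
    have h := hφgrad a b
    rwa [gradient, gradient, ← LinearIsometryEquiv.map_sub, LinearIsometryEquiv.norm_map] at h
  have hsd := fun x z => secondDiff hβ0 hM₁ φ hφdiff hol x z
  -- a.e. z ≠ 0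
  have h0 : (volume : Measure (EuclideanSpace ℝ (Fin N))) {0} = 0 := by
    have hcb := Measure.addHaar_closedBall
      (volume : Measure (EuclideanSpace ℝ (Fin N))) 0 (le_refl (0:ℝ))
    rw [closedBall_zero, finrank_euclideanSpace_fin, zero_pow (by omega : N ≠ 0)] at hcb
    simpa using hcb
  have haez : ∀ᵐ z : EuclideanSpace ℝ (Fin N), z ≠ 0 := by
    rw [ae_iff]
    convert h0 using 2
    ext a; simp
  -- dominating function
  set a : ℝ := (N : ℝ) + σ with ha
  have ha0 : (0:ℝ) < a := by
    have : (1:ℝ) ≤ (N:ℝ) := by exact_mod_cast hN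
    simp only [ha]; linarith
  set g : EuclideanSpace ℝ (Fin N) → ℝ :=
    fun z => min (4 * M₀) (2 * M₁ * ‖z‖ ^ (1 + β)) * (Γ * ‖z‖ ^ (-a)) with hg
  have hgnn : ∀ z, 0 ≤ g z := by
    intro z
    refine mul_nonneg (le_min (by positivity) (by positivity)) (by positivity)
  have hgmeas : Measurable g := by fun_prop
  -- integrability of g
  have hg_int : Integrable g := by
    rw [← integrableOn_univ, ← union_compl_self (ball (0:EuclideanSpace ℝ (Fin N)) 1)]
    refine IntegrableOn.union ?_ ?_
    · -- on ball: dominate by (2 M₁ Γ) ‖z‖ ^ (1 + β - a)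
      have hsneg : 1 + β - a < 0 := by
        have : (1:ℝ) ≤ (N:ℝ) := by exact_mod_cast hN
        simp only [ha]; linarith
      have hsgt : -(N:ℝ) < 1 + β - a := by simp only [ha]; linarith
      refine Integrable.mono' (((ballInt hsgt hsneg).const_mul (2 * M₁ * Γ))) 
        hgmeas.aestronglyMeasurable.restrict ?_
      refine ae_of_all _ fun z => ?_
      rw [Real.norm_eq_abs, abs_of_nonneg (hgnn z)]
      rcases eq_or_ne z 0 with rfl | hz
      · simp [hg, Real.zero_rpow (by positivity : (1:ℝ)+β ≠ 0),
          Real.zero_rpow (by linarith : (1:ℝ)+β-a ≠ 0),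
          Real.zero_rpow (neg_ne_zero.2 ha0.ne')]
      · have hzn : 0 < ‖z‖ := norm_pos_iff.2 hz
        have : g z ≤ (2 * M₁ * ‖z‖ ^ (1 + β)) * (Γ * ‖z‖ ^ (-a)) :=
          mul_le_mul_of_nonneg_right (min_le_right _ _) (by positivity)
        refine le_trans this (le_of_eq ?_)
        have hpow : ‖z‖ ^ ((1:ℝ) + β) * ‖z‖ ^ (-a) = ‖z‖ ^ (1 + β - a) := by
          rw [← Real.rpow_add hzn, ← sub_eq_add_neg]
        rw [← hpow]; ring
    · -- off ball: dominate by (4 M₀ Γ 2^a) (1+‖z‖)^(-a)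
      have hint : Integrable
          (fun z : EuclideanSpace ℝ (Fin N) => 4 * M₀ * Γ * 2 ^ a * (1 + ‖z‖) ^ (-a)) volume := by
        refine (integrable_one_add_norm ?_).const_mul _
        rw [finrank_euclideanSpace_fin]; simp only [ha]; linarith
      refine Integrable.mono' hint.integrableOn hgmeas.aestronglyMeasurable.restrict ?_
      rw [ae_restrict_iff' measurableSet_ball.compl]
      refine ae_of_all _ fun z hz => ?_
      have hz1 : 1 ≤ ‖z‖ := by
        simpa [mem_ball, dist_zero_right] using hz
      have hzn : 0 < ‖z‖ := lt_of_lt_of_le one_pos hz1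
      rw [Real.norm_eq_abs, abs_of_nonneg (hgnn z)]
      have hstep1 : g z ≤ 4 * M₀ * (Γ * ‖z‖ ^ (-a)) :=
        mul_le_mul_of_nonneg_right (min_le_left _ _) (by positivity)
      have hstep2 : ‖z‖ ^ (-a) ≤ 2 ^ a * (1 + ‖z‖) ^ (-a) := by
        have h2z : 1 + ‖z‖ ≤ 2 * ‖z‖ := by linarith
        have hle : (1 + ‖z‖) ^ a ≤ 2 ^ a * ‖z‖ ^ a := by
          rw [← Real.mul_rpow (by norm_num) (norm_nonneg z)]
          exact Real.rpow_le_rpow (by positivity) h2z ha0.le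
        have hp1 : (0:ℝ) < (1 + ‖z‖) ^ a := Real.rpow_pos_of_pos (by linarith) _
        have hp2 : (0:ℝ) < ‖z‖ ^ a := Real.rpow_pos_of_pos hzn _
        rw [Real.rpow_neg (norm_nonneg z), Real.rpow_neg (by linarith : (0:ℝ) ≤ 1 + ‖z‖)]
        rw [← div_eq_mul_inv, inv_eq_one_div, div_le_div_iff₀ hp2 hp1, one_mul]
        linarith [hle]
      calc g z ≤ 4 * M₀ * (Γ * ‖z‖ ^ (-a)) := hstep1
        _ ≤ 4 * M₀ * Γ * 2 ^ a * (1 + ‖z‖) ^ (-a) := by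
            have := mul_le_mul_of_nonneg_left hstep2 (by positivity : (0:ℝ) ≤ 4 * M₀ * Γ)
            calc 4 * M₀ * (Γ * ‖z‖ ^ (-a)) = 4 * M₀ * Γ * ‖z‖ ^ (-a) := by ring
              _ ≤ 4 * M₀ * Γ * (2 ^ a * (1 + ‖z‖) ^ (-a)) := this
              _ = 4 * M₀ * Γ * 2 ^ a * (1 + ‖z‖) ^ (-a) := by ring
  -- main continuity
  rw [continuous_iff_continuousAt]
  intro p₀
  refine ContinuousAt.mul continuousAt_const ?_
  refine continuousAt_of_dominated ?_ ?_ hg_int ?_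
  · refine Eventually.of_forall fun p => Measurable.aestronglyMeasurable ?_
    refine Measurable.mul ?_ (hKmeas p.1)
    exact ((hφc.measurable.comp (measurable_const.add measurable_id)).add
      (hφc.measurable.comp (measurable_const.sub measurable_id))).sub measurable_const
  · refine Eventually.of_forall fun p => ?_
    refine haez.mono fun z hz => ?_
    have hK := hKbound p.1 z hz
    rw [Real.norm_eq_abs, abs_mul, abs_of_nonneg hK.1]
    have hd4 : |φ (p.2 + z) + φ (p.2 - z) - 2 * φ p.2| ≤ 4 * M₀ := by
      have h1 := abs_le.1 (hφbdd (p.2 + z))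
      have h2 := abs_le.1 (hφbdd (p.2 - z))
      have h3 := abs_le.1 (hφbdd p.2)
      rw [abs_le]; constructor <;> [linarith; linarith]
    exact mul_le_mul (le_min hd4 (hsd p.2 z)) hK.2 hK.1
      (le_min (by positivity) (by positivity))
  · refine haez.mono fun z hz => ?_
    refine Continuous.continuousAt ?_
    refine Continuous.mul ?_ ((hKcont z hz).comp continuous_fst)
    refine Continuous.sub ?_ (continuous_const.mul (hφc.comp continuous_snd))
    exact (hφc.comp (continuous_snd.add continuous_const)).add
      (hφc.comp (continuous_snd.sub continuous_const))
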